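/- Let ε > 0, d ≥ 1, k ≥ 1, and for each j = 1,…,k let X^j ∈ ℝ^{d×m_j} with m_j ≥ 1. Let X = [X^1,…,X^k] ∈ ℝ^{d×m} be the horizontal concatenation with m = Σ_j m_j, and let X̄ and X̄^j be the matrices X and X^j centered by their respective column means. Then equality log det(I_d + (d/(mε²))·X̄X̄ᵀ) = Σ_{j=1}^k (m_j/m)·log det(I_d + (d/(m_jε²))·X̄^j(X̄^j)ᵀ) holds if and only if X̄^1(X̄^1)ᵀ/m_1 = X̄^2(X̄^2)ᵀ/m_2 = ⋯ = X̄^k(X̄^k)ᵀ/m_k = X̄X̄ᵀ/m. -/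

import Mathlib

open Matrix BigOperators

/-- Column mean of a matrix `Y : ℝ^{d×n}` (columns indexed by `ι`). -/
noncomputable def colMean {d : ℕ} {ι : Type} [Fintype ι] (Y : Matrix (Fin d) ι ℝ) :
    Fin d → ℝ :=
  fun i => (∑ l, Y i l) / (Fintype.card ι)

/-- Centered matrix `Ȳ = Y - μ(Y)·1_{1×n}`. -/
noncomputable def centered {d : ℕ} {ι : Type} [Fintype ι] (Y : Matrix (Fin d) ι ℝ) :
    Matrix (Fin d) ι ℝ :=
  Matrix.of fun i l => Y i l - colMean Y i

/-- Horizontal concatenation `[X^1, …, X^k]` of matrices, columns indexed by a sigma type. -/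
def hconcat {d k : ℕ} {m : Fin k → ℕ} (Xc : (j : Fin k) → Matrix (Fin d) (Fin (m j)) ℝ) :
    Matrix (Fin d) ((j : Fin k) × Fin (m j)) ℝ :=
  Matrix.of fun i p => Xc p.1 i p.2

/-!
Write `T_j = X̄ʲX̄ʲᵀ / m_j` and `T = X̄X̄ᵀ / m`. Splitting each column deviation from the global
mean into its deviation from the block mean plus the block-mean offset gives
`T = ∑_j (m_j/m) T_j + B` with `B ⪰ 0` the between-block scatter, hence
`I + cT = ∑_j w_j (I + cT_j) + cB` with `c = d/ε²`, `w_j = m_j/m`. Then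
`log det (I + cT) ≥ log det (∑_j w_j (I + cT_j)) ≥ ∑_j w_j log det (I + cT_j)`,
the first step because `det` is strictly increasing along positive semidefinite perturbations, the
second by strict concavity of `log det` on the positive definite cone. Equality therefore forces
`B = 0` and all `T_j` equal, i.e. `T_j = T`. Both matrix facts reduce, by congruence with a square
root of one positive definite matrix, to scalar statements about eigenvalues.
-/

namespace Matrix

variable {n : Type*}

lemma convex_setOf_posDef : Convex ℝ {A : Matrix n n ℝ | A.PosDef} := by
  intro x hx y hy a b ha hb hab
  rcases ha.eq_or_lt with rfl | ha
  · simpa [show b = 1 by linarith] using hy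
  · exact (hx.smul ha).add_posSemidef (hy.posSemidef.smul hb)

variable [Fintype n] [DecidableEq n]

lemma IsHermitian.det_cfc {A : Matrix n n ℝ} (hA : A.IsHermitian) (f : ℝ → ℝ) :
    (cfc f A).det = ∏ i, f (hA.eigenvalues i) := by
  rw [hA.cfc_eq]
  simp [IsHermitian.cfc, -Unitary.conjStarAlgAut_apply]

lemma IsHermitian.det_smul_one_add_smul {C : Matrix n n ℝ} (hC : C.IsHermitian) (a b : ℝ) :
    (a • 1 + b • C).det = ∏ i, (a + b * hC.eigenvalues i) := by
  have : a • 1 + b • C = cfc (fun t => a + b * t) C := by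
    rw [cfc_add .., cfc_const_mul .., cfc_const .., cfc_id' ..]
    simp [Algebra.algebraMap_eq_smul_one]
  rw [this, hC.det_cfc]

lemma IsHermitian.eq_smul_one_of_forall_eigenvalues_eq {C : Matrix n n ℝ} (hC : C.IsHermitian)
    {c : ℝ} (h : ∀ i, hC.eigenvalues i = c) : C = c • 1 := by
  rw [← cfc_id' ℝ C, cfc_congr (g := fun _ => c), cfc_const c C, Algebra.algebraMap_eq_smul_one]
  rw [hC.spectrum_real_eq_range_eigenvalues]
  rintro _ ⟨i, rfl⟩
  exact h i

open scoped MatrixOrder in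
lemma PosDef.exists_sqrt_conj {x : Matrix n n ℝ} (hx : x.PosDef) (y : Matrix n n ℝ) :
    ∃ s C : Matrix n n ℝ, IsUnit s ∧ star s = s ∧ x = s * s ∧ y = s * C * s := by
  have hx_nonneg : 0 ≤ x := hx.posSemidef.nonneg
  have hs : IsUnit (CFC.sqrt x) := (CFC.isUnit_sqrt_iff x).mpr hx.isUnit
  refine ⟨CFC.sqrt x, (CFC.sqrt x)⁻¹ * y * (CFC.sqrt x)⁻¹, hs,
    (CFC.sqrt_nonneg x).isSelfAdjoint.star_eq, (CFC.sqrt_mul_sqrt_self x).symm, ?_⟩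
  have h1 := mul_nonsing_inv _ ((isUnit_iff_isUnit_det _).mp hs)
  have h2 := nonsing_inv_mul _ ((isUnit_iff_isUnit_det _).mp hs)
  simp only [← Matrix.mul_assoc, h1, Matrix.one_mul]
  rw [Matrix.mul_assoc, h2, Matrix.mul_one]

lemma det_mul_mul_self (s M : Matrix n n ℝ) : (s * M * s).det = (s * s).det * M.det := by
  simp only [det_mul]; ring

lemma PosDef.det_lt_det_add {x Q : Matrix n n ℝ} (hx : x.PosDef) (hQ : Q.PosSemidef)
    (hQ0 : Q ≠ 0) : x.det < (x + Q).det := by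
  obtain ⟨s, R, hs, hss, rfl, rfl⟩ := hx.exists_sqrt_conj Q
  have hR : R.PosSemidef := by
    rwa [← IsUnit.posSemidef_star_left_conjugate_iff hs, hss]
  obtain ⟨i, hi⟩ : ∃ i, hR.1.eigenvalues i ≠ 0 := by
    by_contra! h
    exact hQ0 (by simp [hR.1.eq_smul_one_of_forall_eigenvalues_eq h])
  have hprod : 1 < ∏ i, (1 + 1 * hR.1.eigenvalues i) := by
    have := hR.eigenvalues_nonneg
    calc (1 : ℝ) = ∏ _i : n, (1 : ℝ) := by simp
      _ < _ := Finset.prod_lt_prod (by simp) (fun j _ => by simp [this j])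
        ⟨i, Finset.mem_univ _, by simpa using (this i).lt_of_ne' hi⟩
  have hsplit : s * s + s * R * s = s * ((1 : ℝ) • 1 + (1 : ℝ) • R) * s := by
    simp [Matrix.mul_add, Matrix.add_mul]
  rw [hsplit, det_mul_mul_self, hR.1.det_smul_one_add_smul]
  exact lt_mul_of_one_lt_right hx.det_pos hprod

lemma strictConcaveOn_log_det :
    StrictConcaveOn ℝ {A : Matrix n n ℝ | A.PosDef} (fun A => Real.log A.det) := by
  refine ⟨convex_setOf_posDef, ?_⟩
  rintro x (hx : x.PosDef) y (hy : y.PosDef) hxy a b ha hb hab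
  -- After congruence by `s⁻¹` the pair `(x, y)` becomes `(1, C)`, and in an eigenbasis of `C` the
  -- claim is concavity of `log` between `1` and each eigenvalue of `C`, strict for one of them.
  obtain ⟨s, C, hs, hss, rfl, rfl⟩ := hx.exists_sqrt_conj y
  have hC : C.PosDef := by
    rwa [← IsUnit.posDef_star_left_conjugate_iff hs, hss]
  set μ := hC.1.eigenvalues
  obtain ⟨i, hi⟩ : ∃ i, μ i ≠ 1 := by
    by_contra! h
    exact hxy (by simp [hC.1.eq_smul_one_of_forall_eigenvalues_eq h])
  have hμ : ∀ i, 0 < μ i := hC.eigenvalues_pos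
  have hlog : ∑ i, b * Real.log (μ i) < ∑ i, Real.log (a + b * μ i) := by
    refine Finset.sum_lt_sum (fun j _ => ?_) ⟨i, Finset.mem_univ _, ?_⟩
    · simpa using strictConcaveOn_log_Ioi.concaveOn.2 (Set.mem_Ioi.2 one_pos) (hμ j) ha.le hb.le hab
    · simpa using strictConcaveOn_log_Ioi.2 (Set.mem_Ioi.2 one_pos) (hμ i) hi.symm ha hb hab
  have hsplit : a • (s * s) + b • (s * C * s) = s * (a • 1 + b • C) * s := by
    simp [Matrix.mul_add, Matrix.add_mul]
  have hdetC : C.det = ∏ j, μ j := by simpa using hC.1.det_eq_prod_eigenvalues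
  have hD := hx.det_pos
  have hpos : ∀ j ∈ Finset.univ, a + b * μ j ≠ 0 := fun j _ => by nlinarith [hμ j]
  simp only [smul_eq_mul]
  rw [hsplit, det_mul_mul_self, det_mul_mul_self, hC.1.det_smul_one_add_smul,
    hdetC, Real.log_mul hD.ne' (Finset.prod_ne_zero_iff.mpr hpos),
    Real.log_mul hD.ne' (Finset.prod_ne_zero_iff.mpr fun j _ => (hμ j).ne'),
    Real.log_prod hpos, Real.log_prod fun j _ => (hμ j).ne']
  rw [← Finset.mul_sum] at hlog
  linear_combination hlog + Real.log (s * s).det * hab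

lemma eq_zero_and_forall_eq_of_log_det_sum_add_eq {ι : Type*} [Fintype ι] {w : ι → ℝ}
    (hw : ∀ j, 0 < w j) (hw1 : ∑ j, w j = 1) {A : ι → Matrix n n ℝ} (hA : ∀ j, (A j).PosDef)
    {Q : Matrix n n ℝ} (hQ : Q.PosSemidef)
    (h : Real.log (∑ j, w j • A j + Q).det = ∑ j, w j * Real.log (A j).det) :
    Q = 0 ∧ ∀ j j', A j = A j' := by
  have hB : (∑ j, w j • A j).PosDef :=
    convex_setOf_posDef.sum_mem (fun j _ => (hw j).le) hw1 fun j _ => hA j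
  have hjensen : ∑ j, w j * Real.log (A j).det ≤ Real.log (∑ j, w j • A j).det := by
    simpa using strictConcaveOn_log_det.concaveOn.le_map_sum (fun j _ => (hw j).le) hw1
      fun j _ => hA j
  obtain rfl : Q = 0 := by
    by_contra hQ0
    have := Real.log_lt_log hB.det_pos (hB.det_lt_det_add hQ hQ0)
    linarith
  refine ⟨rfl, fun j j' => strictConcaveOn_log_det.eq_of_map_sum_eq (fun j _ => hw j) hw1
    (fun j _ => hA j) ?_ (Finset.mem_univ j) (Finset.mem_univ j')⟩
  simpa using h.le

lemma log_det_one_add_smul_eq_sum_iff {ι : Type*} [Fintype ι] {c : ℝ} (hc : 0 < c)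
    {w : ι → ℝ} (hw : ∀ j, 0 < w j) (hw1 : ∑ j, w j = 1) {T : ι → Matrix n n ℝ}
    (hT : ∀ j, (T j).PosSemidef) {P : Matrix n n ℝ} (hP : P.PosSemidef) :
    Real.log (1 + c • (∑ j, w j • T j + P)).det = ∑ j, w j * Real.log (1 + c • T j).det ↔
      ∀ j, T j = ∑ j, w j • T j + P := by
  constructor
  · intro h
    have hmix : 1 + c • (∑ j, w j • T j + P) = ∑ j, w j • (1 + c • T j) + c • P := by
      simp only [smul_add, Finset.sum_add_distrib, ← Finset.sum_smul, hw1, one_smul,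
        Finset.smul_sum, smul_comm c]
      abel
    obtain ⟨hP0, hAeq⟩ := eq_zero_and_forall_eq_of_log_det_sum_add_eq hw hw1
      (fun j => PosDef.one.add_posSemidef ((hT j).smul hc.le)) (hP.smul hc.le) (hmix ▸ h)
    have hTeq : ∀ j j', T j = T j' := fun j j' =>
      smul_right_injective _ hc.ne' (add_left_cancel (hAeq j j'))
    intro j
    rw [(smul_eq_zero.mp hP0).resolve_left hc.ne', add_zero]
    simp only [← hTeq j, ← Finset.sum_smul, hw1, one_smul]
  · intro h
    calc _ = ∑ j, w j * Real.log (1 + c • (∑ j, w j • T j + P)).det := by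
          rw [← Finset.sum_mul, hw1, one_mul]
      _ = _ := Finset.sum_congr rfl fun j _ => by rw [← h j]

end Matrix

section Scatter

variable {d k : ℕ} {m : Fin k → ℕ}

lemma sum_centered_apply {ι : Type} [Fintype ι] [Nonempty ι] (Y : Matrix (Fin d) ι ℝ)
    (i : Fin d) : ∑ l, centered Y i l = 0 := by
  simp [centered, colMean, Finset.sum_sub_distrib, mul_div_cancel₀]

lemma sub_replicateCol_mul_transpose {ι : Type} [Fintype ι] [Nonempty ι]
    (Y : Matrix (Fin d) ι ℝ) (v : Fin d → ℝ) :
    (Y - replicateCol ι v) * (Y - replicateCol ι v)ᵀ =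
      centered Y * (centered Y)ᵀ +
        (Fintype.card ι : ℝ) • vecMulVec (colMean Y - v) (colMean Y - v) := by
  have hsplit : Y - replicateCol ι v = centered Y + replicateCol ι (colMean Y - v) := by
    ext i l
    simp [centered]
  ext i i'
  simp only [hsplit, Matrix.mul_apply, Matrix.add_apply, transpose_apply, replicateCol_apply,
    Matrix.smul_apply, vecMulVec_apply, add_mul, mul_add, Finset.sum_add_distrib,
    ← Finset.sum_mul, ← Finset.mul_sum, sum_centered_apply, Finset.sum_const, Finset.card_univ,
    smul_eq_mul, nsmul_eq_mul, Pi.sub_apply]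
  ring

lemma hconcat_mul_transpose (Y : (j : Fin k) → Matrix (Fin d) (Fin (m j)) ℝ) :
    hconcat Y * (hconcat Y)ᵀ = ∑ j, Y j * (Y j)ᵀ := by
  ext i i'
  simp [Matrix.mul_apply, hconcat, Matrix.sum_apply, ← Finset.univ_sigma_univ, Finset.sum_sigma]

noncomputable def betweenScatter (Xc : (j : Fin k) → Matrix (Fin d) (Fin (m j)) ℝ) :
    Matrix (Fin d) (Fin d) ℝ :=
  ∑ j, (m j : ℝ) • vecMulVec (colMean (Xc j) - colMean (hconcat Xc))
    (colMean (Xc j) - colMean (hconcat Xc))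

lemma posSemidef_betweenScatter (Xc : (j : Fin k) → Matrix (Fin d) (Fin (m j)) ℝ) :
    (betweenScatter Xc).PosSemidef :=
  posSemidef_sum _ fun j _ => by
    simpa [star_trivial] using (posSemidef_vecMulVec_self_star
      (colMean (Xc j) - colMean (hconcat Xc))).smul (Nat.cast_nonneg (m j))

lemma centered_hconcat_mul_transpose (hm : ∀ j, 0 < m j)
    (Xc : (j : Fin k) → Matrix (Fin d) (Fin (m j)) ℝ) :
    centered (hconcat Xc) * (centered (hconcat Xc))ᵀ =
      ∑ j, centered (Xc j) * (centered (Xc j))ᵀ + betweenScatter Xc := by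
  have hblocks : centered (hconcat Xc) =
      hconcat fun j => Xc j - replicateCol _ (colMean (hconcat Xc)) := rfl
  rw [hblocks, hconcat_mul_transpose, betweenScatter, ← Finset.sum_add_distrib]
  refine Finset.sum_congr rfl fun j _ => ?_
  have : Nonempty (Fin (m j)) := ⟨⟨0, hm j⟩⟩
  rw [sub_replicateCol_mul_transpose, Fintype.card_fin]

lemma one_div_smul_centered_hconcat_mul_transpose (hm : ∀ j, 0 < m j)
    (Xc : (j : Fin k) → Matrix (Fin d) (Fin (m j)) ℝ) :
    (1 / ((∑ j, m j : ℕ) : ℝ)) • (centered (hconcat Xc) * (centered (hconcat Xc))ᵀ) =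
      ∑ j, ((m j : ℝ) / ((∑ j, m j : ℕ) : ℝ)) •
          ((1 / (m j : ℝ)) • (centered (Xc j) * (centered (Xc j))ᵀ)) +
        (1 / ((∑ j, m j : ℕ) : ℝ)) • betweenScatter Xc := by
  rw [centered_hconcat_mul_transpose hm, smul_add, Finset.smul_sum]
  congr 1
  refine Finset.sum_congr rfl fun j _ => ?_
  rw [smul_smul]
  congr 1
  field_simp [(hm j).ne']

lemma posSemidef_centered_mul_transpose {ι : Type} [Fintype ι] (Y : Matrix (Fin d) ι ℝ) :
    (centered Y * (centered Y)ᵀ).PosSemidef := by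
  simpa using posSemidef_self_mul_conjTranspose (centered Y)

end Scatter

theorem stmt4 (ε : ℝ) (hε : 0 < ε) (d k : ℕ) (hd : 1 ≤ d) (hk : 1 ≤ k)
    (m : Fin k → ℕ) (hm : ∀ j, 1 ≤ m j)
    (Xc : (j : Fin k) → Matrix (Fin d) (Fin (m j)) ℝ) :
    (Real.log
        (Matrix.det
          ((1 : Matrix (Fin d) (Fin d) ℝ) +
            ((d : ℝ) / (((∑ j, m j : ℕ) : ℝ) * ε ^ 2)) •
              (centered (hconcat Xc) * (centered (hconcat Xc))ᵀ)))
      = ∑ j,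
          ((m j : ℝ) / ((∑ j, m j : ℕ) : ℝ)) *
            Real.log
              (Matrix.det
                ((1 : Matrix (Fin d) (Fin d) ℝ) +
                  ((d : ℝ) / ((m j : ℝ) * ε ^ 2)) •
                    (centered (Xc j) * (centered (Xc j))ᵀ))))
    ↔ ∀ j, (1 / (m j : ℝ)) • (centered (Xc j) * (centered (Xc j))ᵀ)
        = (1 / ((∑ j, m j : ℕ) : ℝ)) • (centered (hconcat Xc) * (centered (hconcat Xc))ᵀ) := by
  have hmR : ∀ j, (0 : ℝ) < m j := fun j => mod_cast hm j
  have hM : (0 : ℝ) < (∑ j, m j : ℕ) :=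
    Nat.cast_pos.2 (Finset.sum_pos (fun j _ => hm j) ⟨⟨0, hk⟩, Finset.mem_univ _⟩)
  have hw1 : ∑ j, (m j : ℝ) / (∑ j, m j : ℕ) = 1 := by
    rw [← Finset.sum_div, ← Nat.cast_sum, div_self hM.ne']
  have hcoef : ∀ (n : ℝ) (S : Matrix (Fin d) (Fin d) ℝ),
      ((d : ℝ) / (n * ε ^ 2)) • S = ((d : ℝ) / ε ^ 2) • ((1 / n) • S) := fun n S => by
    rw [smul_smul]
    ring_nf
  have hd_pos : (0 : ℝ) < d := mod_cast hd
  simp only [hcoef, one_div_smul_centered_hconcat_mul_transpose hm Xc]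
  exact Matrix.log_det_one_add_smul_eq_sum_iff (by positivity) (fun j => div_pos (hmR j) hM) hw1
    (fun j => (posSemidef_centered_mul_transpose _).smul (one_div_pos.2 (hmR j)).le)
    ((posSemidef_betweenScatter Xc).smul (one_div_pos.2 hM).le)
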